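/- Let C be a compact convex metrizable subset of a locally convex space, F ⊆ C a closed face, and ν a Borel probability measure on C whose barycenter lies in F. Then ν(C \ F) = 0. -/

import Mathlib

/-!
Suppose `ν (C \ F) > 0`. Since `C` is metrizable, `C \ F` is Lindelöf, so some closed convex set
`W` disjoint from `F` has `ν W > 0`. Splitting `ν` into its restrictions to `W` and `Wᶜ` and taking
barycenters `b₁ ∈ C ∩ W`, `b₂ ∈ C` (which exist by a finite intersection argument on compact sets)
writes `b` as the convex combination `ν(W) • b₁ + (1 - ν(W)) • b₂`, at least as seen by continuous
functionals. Since `F` is a closed face containing `b`, this forces `b₁ ∈ F`, contradicting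
`W ∩ F = ∅`.
-/

open MeasureTheory Set Topology

theorem Continuous.integrable_of_ae_mem_isCompact {X G : Type*} [TopologicalSpace X]
    [MeasurableSpace X] [OpensMeasurableSpace X] [NormedAddCommGroup G]
    [SecondCountableTopology G] {μ : Measure X} [IsFiniteMeasure μ] {K : Set X}
    (hK : IsCompact K) (hμK : ∀ᵐ x ∂μ, x ∈ K) {g : X → G} (hg : Continuous g) :
    Integrable g μ := by
  obtain ⟨M, hM⟩ := hK.exists_bound_of_continuousOn hg.continuousOn
  refine (integrable_const M).mono' hg.aestronglyMeasurable ?_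
  filter_upwards [hμK] with x hx using hM x hx

theorem IsLindelof.measure_null_of_locally_null {X : Type*} [TopologicalSpace X]
    [MeasurableSpace X] {μ : Measure X} {s : Set X} (hs : IsLindelof s)
    (h : ∀ x ∈ s, ∃ u ∈ 𝓝 x, μ u = 0) : μ s = 0 := by
  choose! u hux hu using h
  obtain ⟨t, htc, hst⟩ := hs.elim_nhds_subcover' (fun x _ => u x) hux
  exact measure_mono_null hst ((measure_biUnion_null_iff htc).2 fun x hx => hu x x.2)

theorem IsCompact.isLindelof_of_subset {X : Type*} [TopologicalSpace X] {K s : Set X}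
    (hK : IsCompact K) [TopologicalSpace.MetrizableSpace K] (hs : s ⊆ K) : IsLindelof s := by
  let := TopologicalSpace.metrizableSpaceMetric K
  have := isCompact_iff_compactSpace.1 hK
  have := (HereditarilyLindelofSpace.isLindelof ((↑) ⁻¹' s : Set K)).image continuous_subtype_val
  rwa [Subtype.image_preimage_coe, inter_eq_right.2 hs] at this

section Barycenter

variable {E : Type*} [AddCommGroup E] [Module ℝ E] [TopologicalSpace E]
  [MeasurableSpace E] [OpensMeasurableSpace E]

theorem exists_mem_forall_clm_eq_integral {μ : Measure E} [IsProbabilityMeasure μ] {D : Set E}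
    (hD : IsCompact D) (hDconv : Convex ℝ D) (hμD : ∀ᵐ x ∂μ, x ∈ D) :
    ∃ x ∈ D, ∀ f : E →L[ℝ] ℝ, f x = ∫ y, f y ∂μ := by
  -- Finitely many functionals at a time, in `I → ℝ`, where `Convex.integral_mem` applies;
  -- compactness of `D` then handles all of them at once.
  have hfinite : ∀ I : Finset (E →L[ℝ] ℝ),
      (D ∩ ⋂ f ∈ I, {x | f x = ∫ y, f y ∂μ}).Nonempty := by
    intro I
    let T : E →L[ℝ] (I → ℝ) := ContinuousLinearMap.pi fun f => f.1
    have hTint : Integrable T μ := T.continuous.integrable_of_ae_mem_isCompact hD hμD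
    have hmem : ∫ y, T y ∂μ ∈ T '' D :=
      (hDconv.linear_image T.toLinearMap).integral_mem (hD.image T.continuous).isClosed
        (hμD.mono fun y hy => mem_image_of_mem T hy) hTint
    obtain ⟨x, hxD, hTx⟩ := hmem
    refine ⟨x, hxD, mem_iInter₂.2 fun f hf => ?_⟩
    have := (ContinuousLinearMap.proj (R := ℝ) (φ := fun _ : I => ℝ) ⟨f, hf⟩).integral_comp_comm
      hTint
    change T x ⟨f, hf⟩ = _
    rw [hTx]
    simpa [T] using this.symm
  obtain ⟨x, hxD, hx⟩ := hD.inter_iInter_nonempty (fun f : E →L[ℝ] ℝ => {x | f x = ∫ y, f y ∂μ})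
    (fun f => isClosed_eq f.continuous continuous_const) fun I => by
      simpa only [biInter_eq_iInter] using hfinite I
  exact ⟨x, hxD, fun f => mem_iInter.1 hx f⟩

theorem exists_mem_forall_integral_clm_eq_mul {μ : Measure E} [IsFiniteMeasure μ] {D : Set E}
    (hD : IsCompact D) (hDconv : Convex ℝ D) (hDne : D.Nonempty) (hμD : ∀ᵐ x ∂μ, x ∈ D) :
    ∃ x ∈ D, ∀ f : E →L[ℝ] ℝ, ∫ y, f y ∂μ = μ.real univ * f x := by
  rcases eq_zero_or_neZero μ with rfl | hμ
  · obtain ⟨x, hx⟩ := hDne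
    exact ⟨x, hx, fun f => by simp⟩
  obtain ⟨x, hxD, hx⟩ := exists_mem_forall_clm_eq_integral (μ := (μ univ)⁻¹ • μ) hD hDconv
    (Measure.ae_smul_measure hμD _)
  refine ⟨x, hxD, fun f => ?_⟩
  rw [hx, integral_smul_measure, smul_eq_mul, ← mul_assoc, ENNReal.toReal_inv, measureReal_def,
    mul_inv_cancel₀ (ENNReal.toReal_ne_zero.2 ⟨NeZero.ne _, measure_ne_top _ _⟩), one_mul]

end Barycenter

section LocallyConvex

variable {E : Type*} [AddCommGroup E] [Module ℝ E] [TopologicalSpace E]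
  [IsTopologicalAddGroup E] [ContinuousSMul ℝ E] [LocallyConvexSpace ℝ E]

theorem exists_isClosed_convex_mem_nhds_subset {x : E} {U : Set E}
    (hU : U ∈ 𝓝 x) : ∃ W ∈ 𝓝 x, IsClosed W ∧ Convex ℝ W ∧ W ⊆ U := by
  obtain ⟨V, hV, hVclosed, hVU⟩ := exists_mem_nhds_isClosed_subset hU
  obtain ⟨S, ⟨hS, hSconv⟩, hSV⟩ := (LocallyConvexSpace.convex_basis (𝕜 := ℝ) x).mem_iff.1 hV
  exact ⟨closure S, Filter.mem_of_superset hS subset_closure, isClosed_closure, hSconv.closure,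
    (closure_minimal hSV hVclosed).trans hVU⟩

theorem specializes_of_forall_clm_eq {x y : E}
    (h : ∀ f : E →L[ℝ] ℝ, f x = f y) : x ⤳ y := by
  rw [specializes_iff_mem_closure]
  by_contra hy
  obtain ⟨f, u, hfu, huy⟩ :=
    geometric_hahn_banach_closed_point (convex_singleton x).closure isClosed_closure hy
  exact (hfu x (subset_closure rfl)).not_gt (h f ▸ huy)

theorem measure_eq_zero_of_disjoint_face [MeasurableSpace E] [OpensMeasurableSpace E]
    {C F W : Set E}
    (hCcomp : IsCompact C) (hCconv : Convex ℝ C) (hFclosed : IsClosed F)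
    (hface : ∀ c₁ ∈ C, ∀ c₂ ∈ C, ∀ t : ℝ, 0 < t → t < 1 →
      t • c₁ + (1 - t) • c₂ ∈ F → c₁ ∈ F ∧ c₂ ∈ F)
    {ν : Measure E} [IsProbabilityMeasure ν] (hνC : ∀ᵐ x ∂ν, x ∈ C)
    {b : E} (hbF : b ∈ F) (hbar : ∀ f : E →L[ℝ] ℝ, f b = ∫ x, f x ∂ν)
    (hWclosed : IsClosed W) (hWconv : Convex ℝ W) (hWF : Disjoint W F) : ν W = 0 := by
  by_contra hW
  have hCW : ∀ᵐ x ∂ν.restrict W, x ∈ C ∩ W :=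
    (ae_restrict_of_ae hνC).and (ae_restrict_mem hWclosed.measurableSet)
  have : NeZero (ν.restrict W) := ⟨by rwa [Ne, Measure.restrict_eq_zero]⟩
  obtain ⟨b₁, ⟨hb₁C, hb₁W⟩, hb₁⟩ := exists_mem_forall_integral_clm_eq_mul
    (hCcomp.inter_right hWclosed) (hCconv.inter hWconv) hCW.exists hCW
  obtain ⟨b₂, hb₂C, hb₂⟩ := exists_mem_forall_integral_clm_eq_mul (μ := ν.restrict Wᶜ)
    hCcomp hCconv ⟨b₁, hb₁C⟩ (ae_restrict_of_ae hνC)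
  set α := ν.real W
  have hα0 : 0 < α := measureReal_nonneg.lt_of_ne' ((measureReal_ne_zero_iff).2 hW)
  have hα1 : α ≤ 1 := measureReal_le_one
  have hsplit : ∀ f : E →L[ℝ] ℝ, f b = f (α • b₁ + (1 - α) • b₂) := by
    intro f
    have hf : Integrable f ν := f.continuous.integrable_of_ae_mem_isCompact hCcomp hνC
    rw [hbar, ← integral_add_compl hWclosed.measurableSet hf, hb₁, hb₂]
    simp [α, probReal_compl_eq_one_sub hWclosed.measurableSet]
  -- `E` need not be Hausdorff: functionals only determine a point up to specialization.
  have hmemF : α • b₁ + (1 - α) • b₂ ∈ F :=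
    (specializes_of_forall_clm_eq hsplit).mem_closed hFclosed hbF
  have hb₁F : b₁ ∈ F := by
    rcases hα1.lt_or_eq with hα1 | hα1
    · exact (hface b₁ hb₁C b₂ hb₂C α hα0 hα1 hmemF).1
    · simpa [hα1] using hmemF
  exact hWF.notMem_of_mem_left hb₁W hb₁F

end LocallyConvex

theorem bauer_theorem_general
    {E : Type*} [AddCommGroup E] [Module ℝ E] [TopologicalSpace E]
    [IsTopologicalAddGroup E] [ContinuousSMul ℝ E] [LocallyConvexSpace ℝ E]
    [MeasurableSpace E] [BorelSpace E]
    (C : Set E) (hCcomp : IsCompact C) (hCconv : Convex ℝ C)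
    (hCmetr : TopologicalSpace.MetrizableSpace C)
    (F : Set E) (hFclosed : IsClosed F)
    -- `F` is a face of `C`:
    (hface : ∀ c₁ ∈ C, ∀ c₂ ∈ C, ∀ t : ℝ, 0 < t → t < 1 →
      t • c₁ + (1 - t) • c₂ ∈ F → c₁ ∈ F ∧ c₂ ∈ F)
    (ν : Measure E) [IsProbabilityMeasure ν] (hνC : ν Cᶜ = 0)
    -- `b` is the barycenter of `ν` and lies in `F`:
    (b : E) (hbF : b ∈ F)
    (hbar : ∀ f : E →L[ℝ] ℝ, f b = ∫ x, f x ∂ν) :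
    ν (C \ F) = 0 := by
  have := hCmetr
  refine (hCcomp.isLindelof_of_subset sdiff_subset).measure_null_of_locally_null fun x hx => ?_
  obtain ⟨W, hWx, hWclosed, hWconv, hWF⟩ :=
    exists_isClosed_convex_mem_nhds_subset (hFclosed.isOpen_compl.mem_nhds hx.2)
  exact ⟨W, hWx, measure_eq_zero_of_disjoint_face hCcomp hCconv hFclosed hface
    (mem_ae_iff.2 hνC) hbF hbar hWclosed hWconv (subset_compl_iff_disjoint_right.1 hWF)⟩

/-- Bauer's theorem: if the barycenter of a Borel probability measure on a
compact convex metrizable subset `C` of a locally convex space lies in a closed face `F`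
of `C`, then the measure is supported on `F`. -/
theorem bauer_theorem
    {E : Type*} [AddCommGroup E] [Module ℝ E] [TopologicalSpace E]
    [IsTopologicalAddGroup E] [ContinuousSMul ℝ E] [LocallyConvexSpace ℝ E]
    [MeasurableSpace E] [BorelSpace E]
    (C : Set E) (hCcomp : IsCompact C) (hCconv : Convex ℝ C)
    (hCmetr : TopologicalSpace.MetrizableSpace C)
    (F : Set E) (hFC : F ⊆ C) (hFclosed : IsClosed F) (hFconv : Convex ℝ F)
    -- `F` is a face of `C`:
    (hface : ∀ c₁ ∈ C, ∀ c₂ ∈ C, ∀ t : ℝ, 0 < t → t < 1 →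
      t • c₁ + (1 - t) • c₂ ∈ F → c₁ ∈ F ∧ c₂ ∈ F)
    (ν : Measure E) [IsProbabilityMeasure ν] (hνC : ν Cᶜ = 0)
    -- `b` is the barycenter of `ν` and lies in `F`:
    (b : E) (hbF : b ∈ F)
    (hbar : ∀ f : E →L[ℝ] ℝ, f b = ∫ x, f x ∂ν) :
    ν (C \ F) = 0 :=
  bauer_theorem_general C hCcomp hCconv hCmetr F hFclosed hface ν hνC b hbF hbar
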